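/- Suppose η : Λ → ℂ is a function on a set of weights Λ ⊂ ℤ^p satisfying the recursion η(μ + 2e_j)/η(μ) = (λ - μ_j - ρ + d(j-1))/(λ + μ_j + ρ - d(j-1)) for each standard basis vector e_j, starting from an initial weight μ⁰ = (k,...,k). Then η(μ) = (-1)^{(|μ|-pk)/2} · η(μ⁰) · [Γ_{p,d}((-λ+ρ+μ)/2)·Γ_{p,d}((λ+ρ+μ⁰)/2)] / [Γ_{p,d}((λ+ρ+μ)/2)·Γ_{p,d}((-λ+ρ+μ⁰)/2)], where Γ_{p,d}(z) = ∏_{j=1}^p Γ(z_j - d(j-1)/2) and |μ| = Σ μ_j, for all μ reachable from μ⁰ by adding vectors 2e_j. -/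
import Mathlib


open scoped BigOperators

/-- The Siegel (Gindikin) Gamma function `Γ_{p,d}(z) = ∏_{j=1}^p Γ(z_j - (d/2)(j-1))`,
with `j - 1` realized by the `Fin p` index. -/
noncomputable def siegelGamma (p d : ℕ) (z : Fin p → ℂ) : ℂ :=
  ∏ j : Fin p, Complex.Gamma (z j - (d : ℂ) / 2 * (j : ℕ))

lemma sg_step (p d : ℕ) (f : Fin p → ℂ) (j : Fin p)
    (h : f j - (d : ℂ) / 2 * (j : ℕ) ≠ 0) :
    siegelGamma p d (fun i => f i + if i = j then 1 else 0)
      = (f j - (d : ℂ) / 2 * (j : ℕ)) * siegelGamma p d f := by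
  unfold siegelGamma
  rw [← Finset.mul_prod_erase _ _ (Finset.mem_univ j),
      ← Finset.mul_prod_erase _ (fun i => Complex.Gamma (f i - (d : ℂ) / 2 * (i : ℕ)))
        (Finset.mem_univ j), ← mul_assoc]
  congr 1
  · have hb : (fun i => f i + if i = j then 1 else 0) j = f j + 1 := by simp
    rw [hb]
    have he : f j + 1 - (d : ℂ) / 2 * (j : ℕ) = (f j - (d : ℂ) / 2 * (j : ℕ)) + 1 := by ring
    rw [he, Complex.Gamma_add_one _ h]
  · exact Finset.prod_congr rfl fun i hi => by
      simp only [if_neg (Finset.ne_of_mem_erase hi), add_zero]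

/-- Solution of the spectrum-generating recursion: if
`η(μ + 2e_j)/η(μ) = (λ - μ_j - ρ + d(j-1))/(λ + μ_j + ρ - d(j-1))` starting from
`μ⁰ = (k,…,k)`, then for every weight `μ = μ⁰ + 2ν` reachable from `μ⁰`,
`η(μ) = (-1)^{(|μ|-pk)/2} η(μ⁰) Γ_{p,d}((-λ+ρ+μ)/2) Γ_{p,d}((λ+ρ+μ⁰)/2) /
(Γ_{p,d}((λ+ρ+μ)/2) Γ_{p,d}((-λ+ρ+μ⁰)/2))` (stated here in cross-multiplied form). -/
theorem stmt4 (p d : ℕ) (hp : 1 ≤ p) (hd : 1 ≤ d) (lam ρ : ℂ) (k : ℤ)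
    (μ : (Fin p → ℕ) → (Fin p → ℂ))
    (hμ : ∀ ν i, μ ν i = (k : ℂ) + 2 * (ν i : ℕ))
    (η : (Fin p → ℂ) → ℂ)
    (hreg : ∀ (ν : Fin p → ℕ) (j : Fin p), lam + μ ν j + ρ - (d : ℂ) * (j : ℕ) ≠ 0)
    (hreg' : ∀ (ν : Fin p → ℕ) (j : Fin p), lam - μ ν j - ρ + (d : ℂ) * (j : ℕ) ≠ 0)
    (hrec : ∀ (ν : Fin p → ℕ) (j : Fin p),
      η (fun i => μ ν i + if i = j then 2 else 0) * (lam + μ ν j + ρ - (d : ℂ) * (j : ℕ))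
        = (lam - μ ν j - ρ + (d : ℂ) * (j : ℕ)) * η (μ ν)) :
    ∀ ν : Fin p → ℕ,
      η (μ ν) * siegelGamma p d (fun i => (lam + ρ + μ ν i) / 2)
          * siegelGamma p d (fun _ => (-lam + ρ + (k : ℂ)) / 2)
        = (-1) ^ (∑ j, ν j) * η (μ (fun _ => 0))
          * siegelGamma p d (fun i => (-lam + ρ + μ ν i) / 2)
          * siegelGamma p d (fun _ => (lam + ρ + (k : ℂ)) / 2) := by
  suffices H : ∀ n (ν : Fin p → ℕ), (∑ j, ν j) = n →
      η (μ ν) * siegelGamma p d (fun i => (lam + ρ + μ ν i) / 2)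
          * siegelGamma p d (fun _ => (-lam + ρ + (k : ℂ)) / 2)
        = (-1) ^ (∑ j, ν j) * η (μ (fun _ => 0))
          * siegelGamma p d (fun i => (-lam + ρ + μ ν i) / 2)
          * siegelGamma p d (fun _ => (lam + ρ + (k : ℂ)) / 2) by
    intro ν; exact H _ ν rfl
  intro n
  induction n with
  | zero =>
    intro ν hν
    have hν0 : ν = fun _ => 0 := by
      funext i
      exact (Finset.sum_eq_zero_iff.mp hν) i (Finset.mem_univ i)
    subst hν0
    have h1 : (fun i : Fin p => (lam + ρ + μ (fun _ => 0) i) / 2)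
        = fun _ => (lam + ρ + (k : ℂ)) / 2 := by
      funext i; rw [hμ]; push_cast; ring
    have h2 : (fun i : Fin p => (-lam + ρ + μ (fun _ => 0) i) / 2)
        = fun _ => (-lam + ρ + (k : ℂ)) / 2 := by
      funext i; rw [hμ]; push_cast; ring
    rw [h1, h2]
    simp only [Finset.sum_const_nat fun _ _ => rfl]
    ring
  | succ n ih =>
    intro ν hν
    obtain ⟨j, hj⟩ : ∃ j, ν j ≠ 0 := by
      by_contra h
      push_neg at h
      simp [Finset.sum_eq_zero fun i _ => h i] at hν
    set ν' : Fin p → ℕ := Function.update ν j (ν j - 1) with hν'def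
    have hνj : ν j = ν' j + 1 := by
      simp only [hν'def, Function.update_self]; omega
    have hνi : ∀ i, i ≠ j → ν i = ν' i := fun i hi => by
      simp [hν'def, Function.update_of_ne hi]
    have hsum' : ∑ i, ν' i = n := by
      have h1 : ∑ i, ν i = (∑ i, ν' i) + 1 := by
        have : ∀ i ∈ Finset.univ, ν i = ν' i + if i = j then 1 else 0 := by
          intro i _
          by_cases hi : i = j
          · subst hi; simp [hνj]
          · simp [hi, hνi i hi]
        rw [Finset.sum_congr rfl this, Finset.sum_add_distrib]
        simp
      omega
    have hμν : ∀ i, μ ν i = μ ν' i + if i = j then 2 else 0 := by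
      intro i; rw [hμ, hμ]
      by_cases hi : i = j
      · subst hi; rw [hνj, if_pos rfl]; push_cast; ring
      · rw [hνi i hi, if_neg hi, add_zero]
    have hμνfun : μ ν = fun i => μ ν' i + if i = j then 2 else 0 := funext hμν
    set zA : ℂ := (lam + ρ + μ ν' j) / 2 - (d : ℂ) / 2 * (j : ℕ) with hzA
    set zB : ℂ := (-lam + ρ + μ ν' j) / 2 - (d : ℂ) / 2 * (j : ℕ) with hzB
    have hcA : lam + μ ν' j + ρ - (d : ℂ) * (j : ℕ) = 2 * zA := by rw [hzA]; ring
    have hcB : lam - μ ν' j - ρ + (d : ℂ) * (j : ℕ) = -(2 * zB) := by rw [hzB]; ring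
    have hzA0 : zA ≠ 0 := by
      intro h; apply hreg ν' j; rw [hcA, h, mul_zero]
    have hzB0 : zB ≠ 0 := by
      intro h; apply hreg' ν' j; rw [hcB, h, mul_zero, neg_zero]
    have hA : siegelGamma p d (fun i => (lam + ρ + μ ν i) / 2)
        = zA * siegelGamma p d (fun i => (lam + ρ + μ ν' i) / 2) := by
      have he : (fun i => (lam + ρ + μ ν i) / 2)
          = fun i => (lam + ρ + μ ν' i) / 2 + if i = j then 1 else 0 := by
        funext i; rw [hμν i]
        by_cases hi : i = j <;> simp [hi] <;> ring
      rw [he, sg_step p d _ j hzA0]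
    have hB : siegelGamma p d (fun i => (-lam + ρ + μ ν i) / 2)
        = zB * siegelGamma p d (fun i => (-lam + ρ + μ ν' i) / 2) := by
      have he : (fun i => (-lam + ρ + μ ν i) / 2)
          = fun i => (-lam + ρ + μ ν' i) / 2 + if i = j then 1 else 0 := by
        funext i; rw [hμν i]
        by_cases hi : i = j <;> simp [hi] <;> ring
      rw [he, sg_step p d _ j hzB0]
    have key : η (μ ν) * zA = -(zB * η (μ ν')) := by
      have h1 := hrec ν' j
      rw [← hμνfun, hcA, hcB] at h1
      linear_combination h1 / 2
    have ih' := ih ν' hsum'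
    rw [hsum'] at ih'
    rw [hν, hA, hB]
    linear_combination (siegelGamma p d (fun i => (lam + ρ + μ ν' i) / 2)
        * siegelGamma p d (fun _ => (-lam + ρ + (k : ℂ)) / 2)) * key + (-zB) * ih'
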